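/- arXiv:0810.2781 — 9 statements merged into one kernel-verified Lean document; each statement's English description precedes it below -/
import Mathlib

section
/- If H admits a pseudo-tree structure, then the set of all rows of H admits a triangular enumeration. (This is the combinatorial content of Lemma 1: any LDPC code whose Tanner graph is a pseudo-tree is successfully encoded by the label-and-decide algorithm.) -/
/-! Listing the check nodes by non-increasing tier and pairing each with its parent bit node
gives a triangular schedule: if an earlier check node `i_k` were adjacent to the parent of a
later one `i_l`, the pseudo-tree condition would force `t i_k < t i_l`, against the order. -/

/-- A pseudo-tree structure on a parity check matrix `H` over GF(2): an injective
assignment `p` of a parent bit node (column) to each check node (row), together with a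
tier map `t`, such that each check node is adjacent to its parent, and whenever a check
node `i` is adjacent to the parent of a different check node `i'`, the tier of `i` is
strictly smaller than the tier of `i'`. -/
def PseudoTreeStructure {M N : Type*} (H : Matrix M N (ZMod 2)) : Prop :=
  ∃ (p : M → N) (t : M → ℕ),
    Function.Injective p ∧
    (∀ i, H i (p i) = 1) ∧
    (∀ i i', i ≠ i' → H i (p i') = 1 → t i < t i')

/-- A triangular enumeration of a finite set `R` of rows of `H`: an enumeration
`e` of `R` together with pairwise distinct columns `c` such that `H (e k) (c k) = 1`
for every `k`, and `H (e k) (c l) = 0` whenever `k < l`. -/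
def TriangularEnum {M N : Type*} [DecidableEq M] (H : Matrix M N (ZMod 2))
    (R : Finset M) : Prop :=
  ∃ (e : Fin R.card → M) (c : Fin R.card → N),
    Function.Injective e ∧ (∀ k, e k ∈ R) ∧
    Function.Injective c ∧
    (∀ k, H (e k) (c k) = 1) ∧
    (∀ k l, k < l → H (e k) (c l) = 0)

theorem Finset.exists_enum_antitone {α β : Type*} [LinearOrder β] (R : Finset α) (t : α → β) :
    ∃ e : Fin R.card → α, Function.Injective e ∧ (∀ k, e k ∈ R) ∧ Antitone (t ∘ e) := by
  let enum : Fin R.card → α := fun k => R.equivFin.symm k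
  -- sorting by the tier in the dual order makes it non-increasing
  let σ := Tuple.sort (OrderDual.toDual ∘ t ∘ enum)
  refine ⟨enum ∘ σ, ?_, fun k => (R.equivFin.symm (σ k)).2, ?_⟩
  · exact (Subtype.val_injective.comp R.equivFin.symm.injective).comp σ.injective
  · exact (Tuple.monotone_sort (OrderDual.toDual ∘ t ∘ enum)).dual_right

theorem triangularEnum_of_parent_tier {M N : Type*} [DecidableEq M] (H : Matrix M N (ZMod 2))
    (R : Finset M) (p : M → N) (t : M → ℕ) (hp : Set.InjOn p R) (hparent : ∀ i ∈ R, H i (p i) = 1)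
    (htier : ∀ i ∈ R, ∀ i' ∈ R, i ≠ i' → H i (p i') = 1 → t i < t i') :
    TriangularEnum H R := by
  obtain ⟨e, he, heR, hanti⟩ := R.exists_enum_antitone t
  refine ⟨e, p ∘ e, he, heR, fun k l hkl => he (hp (heR k) (heR l) hkl),
    fun k => hparent _ (heR k), fun k l hkl => ?_⟩
  by_contra hne
  have hlt := htier _ (heR k) _ (heR l) (he.ne hkl.ne) (Fin.eq_one_of_ne_zero _ hne)
  exact (hanti hkl.le).not_gt hlt

theorem pseudoTree_triangularEnum_general {M N : Type*} [Fintype M] [DecidableEq M]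
    (H : Matrix M N (ZMod 2)) (hPT : PseudoTreeStructure H) :
    TriangularEnum H Finset.univ := by
  obtain ⟨p, t, hp, hparent, htier⟩ := hPT
  exact triangularEnum_of_parent_tier H _ p t hp.injOn (fun i _ => hparent i)
    (fun i _ i' _ => htier i i')

theorem pseudoTree_triangularEnum {M N : Type*} [Fintype M] [DecidableEq M] [Fintype N]
    (H : Matrix M N (ZMod 2)) (hPT : PseudoTreeStructure H) :
    TriangularEnum H Finset.univ :=
  pseudoTree_triangularEnum_general H hPT
end

section
/- If H admits a pseudo-tree structure, then for every nonempty set R of rows of H there exists a column whose weight within R is exactly 1. In particular, H contains no encoding stopping set. (Lemma: any pseudo-tree or union of pseudo-trees does not contain encoding stopping sets.) -/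
/-- An encoding stopping set of `H`: a nonempty set `R` of rows whose rows are linearly
independent over GF(2) and such that every column in the support of `R` has weight at
least `2` within `R`. -/
def IsEncodingStoppingSet {M N : Type*} [DecidableEq M] (H : Matrix M N (ZMod 2))
    (R : Finset M) : Prop :=
  R.Nonempty ∧
  LinearIndependent (ZMod 2) (fun i : R => H i) ∧
  ∀ j, (∃ i ∈ R, H i j = 1) → 2 ≤ (R.filter (fun i => H i j = 1)).card

/-! In a pseudo-tree, a check node of least tier among `R` is the only node of `R` adjacent to
its parent bit node: any other neighbour of that bit node has strictly smaller tier. So that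
column has weight exactly one in `R`, which an encoding stopping set forbids. -/

theorem filter_eq_singleton_of_tier_minimal {M N : Type*} {H : Matrix M N (ZMod 2)}
    {t : M → ℕ} {R : Finset M} {i₀ : M} {j : N} (hi₀ : i₀ ∈ R) (hmin : ∀ i ∈ R, t i₀ ≤ t i)
    (hj : H i₀ j = 1) (htier : ∀ i, i ≠ i₀ → H i j = 1 → t i < t i₀) :
    R.filter (fun i => H i j = 1) = {i₀} := by
  refine Finset.eq_singleton_iff_unique_mem.mpr ⟨Finset.mem_filter.mpr ⟨hi₀, hj⟩, ?_⟩
  intro i hi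
  obtain ⟨hiR, hij⟩ := Finset.mem_filter.mp hi
  by_contra hne
  exact (htier i hne hij).not_ge (hmin i hiR)

theorem PseudoTreeStructure.exists_card_filter_eq_one {M N : Type*} {H : Matrix M N (ZMod 2)}
    (hPT : PseudoTreeStructure H) {R : Finset M} (hR : R.Nonempty) :
    ∃ j, (R.filter (fun i => H i j = 1)).card = 1 := by
  obtain ⟨p, t, -, hpar, htier⟩ := hPT
  obtain ⟨i₀, hi₀, hmin⟩ := R.exists_min_image t hR
  refine ⟨p i₀, ?_⟩
  rw [filter_eq_singleton_of_tier_minimal hi₀ hmin (hpar i₀)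
    (fun i hne => htier i i₀ hne), Finset.card_singleton]

theorem IsEncodingStoppingSet.card_filter_ne_one {M N : Type*} [DecidableEq M]
    {H : Matrix M N (ZMod 2)} {R : Finset M} (hS : IsEncodingStoppingSet H R) (j : N) :
    (R.filter (fun i => H i j = 1)).card ≠ 1 := by
  intro hone
  have hsupp : ∃ i ∈ R, H i j = 1 :=
    Finset.filter_nonempty_iff.mp (Finset.card_pos.mp (by omega))
  have := hS.2.2 j hsupp
  omega

theorem pseudoTree_no_encodingStoppingSet_general {M N : Type*} [DecidableEq M]
    (H : Matrix M N (ZMod 2)) (hPT : PseudoTreeStructure H) :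
    (∀ R : Finset M, R.Nonempty →
      ∃ j, (R.filter (fun i => H i j = 1)).card = 1) ∧
    ¬ ∃ R : Finset M, IsEncodingStoppingSet H R := by
  refine ⟨fun R hR => hPT.exists_card_filter_eq_one hR, ?_⟩
  rintro ⟨R, hS⟩
  obtain ⟨j, hj⟩ := hPT.exists_card_filter_eq_one hS.1
  exact hS.card_filter_ne_one j hj

theorem pseudoTree_no_encodingStoppingSet {M N : Type*} [Fintype M] [DecidableEq M]
    [Fintype N] (H : Matrix M N (ZMod 2)) (hPT : PseudoTreeStructure H) :
    (∀ R : Finset M, R.Nonempty →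
      ∃ j, (R.filter (fun i => H i j = 1)).card = 1) ∧
    ¬ ∃ R : Finset M, IsEncodingStoppingSet H R :=
  pseudoTree_no_encodingStoppingSet_general H hPT
end

section
/- Let R be a nonempty set of rows of H such that every column in the support of R has weight at least 2 within R. Then R admits no triangular enumeration. (This is the combinatorial content of Theorem 1: an encoding stopping set cannot be encoded successfully by the label-and-decide algorithm.) -/
namespace TriangularEnum

variable {M N : Type*} [DecidableEq M] {H : Matrix M N (ZMod 2)} {R : Finset M}

theorem exists_column_card_filter_eq_one (hne : R.Nonempty) (h : TriangularEnum H R) :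
    ∃ j, (R.filter (fun i => H i j = 1)).card = 1 := by
  obtain ⟨e, c, he, heR, -, hdiag, hupper⟩ := h
  have hsurj : Set.SurjOn e (Finset.univ : Finset (Fin R.card)) R :=
    Finset.surjOn_of_injOn_of_card_le e (fun k _ => heR k) he.injOn (Finset.card_fin _).ge
  have hpos : 0 < R.card := Finset.card_pos.mpr hne
  let last : Fin R.card := ⟨R.card - 1, by omega⟩
  have hle_last (k : Fin R.card) : k ≤ last := Nat.le_sub_one_of_lt k.isLt
  refine ⟨c last, Finset.card_eq_one.mpr ⟨e last, ?_⟩⟩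
  refine Finset.eq_singleton_iff_unique_mem.mpr ⟨Finset.mem_filter.mpr ⟨heR last, hdiag last⟩, ?_⟩
  rintro i hi
  obtain ⟨hiR, hi1⟩ := Finset.mem_filter.mp hi
  obtain ⟨k, -, rfl⟩ := hsurj hiR
  obtain hlt | heq := (hle_last k).lt_or_eq
  · simp [hupper k last hlt] at hi1
  · rw [heq]

end TriangularEnum

theorem encodingStoppingSet_no_triangularEnum_general {M N : Type*} [DecidableEq M]
    (H : Matrix M N (ZMod 2)) (R : Finset M) (hne : R.Nonempty)
    (hwt : ∀ j, (∃ i ∈ R, H i j = 1) → 2 ≤ (R.filter (fun i => H i j = 1)).card) :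
    ¬ TriangularEnum H R := by
  intro h
  obtain ⟨j, hj⟩ := h.exists_column_card_filter_eq_one hne
  obtain ⟨i, hi⟩ := Finset.card_pos.mp (hj ▸ Nat.one_pos)
  have := hwt j ⟨i, Finset.mem_filter.mp hi⟩
  omega

theorem encodingStoppingSet_no_triangularEnum {M N : Type*} [Fintype M] [DecidableEq M]
    [Fintype N] (H : Matrix M N (ZMod 2)) (R : Finset M) (hne : R.Nonempty)
    (hwt : ∀ j, (∃ i ∈ R, H i j = 1) → 2 ≤ (R.filter (fun i => H i j = 1)).card) :
    ¬ TriangularEnum H R :=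
  encodingStoppingSet_no_triangularEnum_general H R hne hwt
end

section
/- Suppose the rows of H are linearly independent over GF(2) and H contains no encoding stopping set. Then the set of all rows of H admits a triangular enumeration. (Theorem 2: if a Tanner graph does not contain any encoding stopping set, then it can be encoded by the label-and-decide algorithm.) -/
/-!
A nonempty set `R` of independent rows that is not an encoding stopping set has a column `j` of
weight exactly one within `R`. Its unique row `i` can be scheduled last, with `j` as its parity
bit, since no other row of `R` meets `j`; the rows of `R \ {i}` are still independent and contain
no encoding stopping set, so they admit a triangular enumeration by induction.
-/

namespace TriangularEnum

variable {M N : Type*} [DecidableEq M] {H : Matrix M N (ZMod 2)}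

theorem empty (H : Matrix M N (ZMod 2)) : TriangularEnum H ∅ :=
  ⟨Fin.elim0, Fin.elim0, fun k => k.elim0, fun k => k.elim0, fun k => k.elim0,
    fun k => k.elim0, fun k => k.elim0⟩

theorem insert {R : Finset M} (hR : TriangularEnum H R) {i : M} {j : N} (hi : i ∉ R)
    (hij : H i j = 1) (hj : ∀ i' ∈ R, H i' j = 0) : TriangularEnum H (insert i R) := by
  obtain ⟨e, c, he, heR, hc, hdiag, hupper⟩ := hR
  have hcj : j ∉ Set.range c := by
    rintro ⟨k, rfl⟩
    simpa [hj _ (heR k)] using hdiag k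
  unfold TriangularEnum
  rw [Finset.card_insert_of_notMem hi]
  refine ⟨Fin.snoc e i, Fin.snoc c j,
    Fin.snoc_injective_of_injective he fun ⟨k, hk⟩ => hi (hk ▸ heR k), ?_,
    Fin.snoc_injective_of_injective hc hcj, ?_, ?_⟩
  · intro k
    induction k using Fin.lastCases <;> simp [heR]
  · intro k
    induction k using Fin.lastCases <;> simp [hij, hdiag]
  · intro k l hkl
    induction l using Fin.lastCases with
    | last =>
      obtain ⟨k, rfl⟩ := Fin.exists_castSucc_eq.2 (Fin.ne_last_of_lt hkl)
      simpa using hj _ (heR k)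
    | cast l =>
      obtain ⟨k, rfl⟩ := Fin.exists_castSucc_eq.2 (Fin.ne_last_of_lt hkl)
      simpa using hupper k l (Fin.castSucc_lt_castSucc_iff.1 hkl)

end TriangularEnum

section

variable {M N : Type*} [DecidableEq M] {H : Matrix M N (ZMod 2)}

theorem exists_private_column_of_not_isEncodingStoppingSet {R : Finset M}
    (hR : R.Nonempty) (hind : LinearIndependent (ZMod 2) (fun i : R => H i))
    (hstop : ¬ IsEncodingStoppingSet H R) :
    ∃ i ∈ R, ∃ j, H i j = 1 ∧ ∀ i' ∈ R.erase i, H i' j = 0 := by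
  simp only [IsEncodingStoppingSet, hR, hind, true_and, not_forall, not_le] at hstop
  obtain ⟨j, ⟨i, hiR, hij⟩, hcard⟩ := hstop
  refine ⟨i, hiR, j, hij, fun i' hi' => ?_⟩
  obtain ⟨hne, hi'R⟩ := Finset.mem_erase.1 hi'
  have hH : H i' j ≠ 1 := fun h => hcard.not_ge <| Finset.one_lt_card.2
    ⟨i', Finset.mem_filter.2 ⟨hi'R, h⟩, i, Finset.mem_filter.2 ⟨hiR, hij⟩, hne⟩
  exact (by decide : ∀ x : ZMod 2, x ≠ 1 → x = 0) _ hH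

theorem triangularEnum_of_linearIndependent (R : Finset M)
    (hind : LinearIndependent (ZMod 2) (fun i : R => H i))
    (hno : ∀ S ⊆ R, ¬ IsEncodingStoppingSet H S) : TriangularEnum H R := by
  induction R using Finset.strongInduction with
  | H R ih =>
  rcases R.eq_empty_or_nonempty with rfl | hR
  · exact TriangularEnum.empty H
  obtain ⟨i, hiR, j, hij, hj⟩ :=
    exists_private_column_of_not_isEncodingStoppingSet hR hind (hno R subset_rfl)
  have hsub : R.erase i ⊆ R := Finset.erase_subset i R
  rw [← Finset.insert_erase hiR]
  refine (ih _ (Finset.erase_ssubset hiR) ?_ fun S hS => hno S (hS.trans hsub)).insert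
    (Finset.notMem_erase i R) hij hj
  exact LinearIndepOn.mono (s := (R : Set M)) hind (Finset.coe_subset.2 hsub)

end

theorem no_encodingStoppingSet_triangularEnum_general {M N : Type*} [Fintype M] [DecidableEq M]
    (H : Matrix M N (ZMod 2))
    (hind : LinearIndependent (ZMod 2) (fun i : M => H i))
    (hno : ¬ ∃ R : Finset M, IsEncodingStoppingSet H R) :
    TriangularEnum H Finset.univ :=
  triangularEnum_of_linearIndependent _ (hind.comp _ Subtype.val_injective)
    fun S _ hS => hno ⟨S, hS⟩

theorem no_encodingStoppingSet_triangularEnum {M N : Type*} [Fintype M] [DecidableEq M]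
    [Fintype N] (H : Matrix M N (ZMod 2))
    (hind : LinearIndependent (ZMod 2) (fun i : M => H i))
    (hno : ¬ ∃ R : Finset M, IsEncodingStoppingSet H R) :
    TriangularEnum H Finset.univ :=
  no_encodingStoppingSet_triangularEnum_general H hind hno
end

section
/- Suppose the rows of H are linearly independent over GF(2) and H contains no encoding stopping set. Then H admits a pseudo-tree structure. (Corollary 1: if a Tanner graph does not contain any encoding stopping set, then it can be represented by a union of pseudo-trees.) -/
open Finset

section PrivateNeighbor

variable {M N : Type*} [DecidableEq M] (r : M → N → Prop)

def IsPseudoTreeOn (R : Finset M) (p : M → N) (t : M → ℕ) : Prop :=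
  Set.InjOn p R ∧ (∀ i ∈ R, r i (p i)) ∧ ∀ i ∈ R, ∀ i' ∈ R, i ≠ i' → r i (p i') → t i < t i'

variable {r}

theorem IsPseudoTreeOn.insert {R : Finset M} {p : M → N} {t : M → ℕ}
    (h : IsPseudoTreeOn r R p t) {i : M} (hi : i ∉ R) {j : N} (hij : r i j)
    (hprivate : ∀ i' ∈ R, ¬ r i' j) :
    IsPseudoTreeOn r (insert i R) (Function.update p i j)
      (Function.update (fun x => t x + 1) i 0) := by
  obtain ⟨hinj, hadj, htier⟩ := h
  have hp : ∀ x ∈ R, Function.update p i j x = p x := fun x hx =>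
    Function.update_of_ne (ne_of_mem_of_not_mem hx hi) _ _
  refine ⟨?_, ?_, ?_⟩
  · rw [coe_insert, Set.injOn_insert (mod_cast hi), (Set.EqOn.injOn_iff hp)]
    refine ⟨hinj, ?_⟩
    rintro ⟨x, hx, hpx⟩
    rw [Function.update_self, hp x hx] at hpx
    exact hprivate x hx (hpx ▸ hadj x hx)
  · simp only [forall_mem_insert, Function.update_self, hij, true_and]
    exact fun x hx => (hp x hx).symm ▸ hadj x hx
  · simp only [forall_mem_insert]
    refine ⟨⟨fun hne => ?_, fun x hx _ _ => ?_⟩, fun x hx => ⟨fun hne => ?_, fun y hy hne => ?_⟩⟩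
    · exact (hne rfl).elim
    · simp [ne_of_mem_of_not_mem hx hi]
    · rw [Function.update_self]
      exact fun hxj => (hprivate x hx hxj).elim
    · rw [hp y hy]
      simpa [ne_of_mem_of_not_mem hx hi, ne_of_mem_of_not_mem hy hi] using htier x hx y hy hne

theorem exists_isPseudoTreeOn_of_forall_exists_private
    (hprivate : ∀ R : Finset M, R.Nonempty → ∃ i ∈ R, ∃ j, r i j ∧ ∀ i' ∈ R, r i' j → i' = i)
    (R : Finset M) : ∃ p t, IsPseudoTreeOn r R p t := by
  have hadj (i : M) : ∃ j, r i j := by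
    obtain ⟨_, hi, j, hij, -⟩ := hprivate {i} (singleton_nonempty i)
    exact ⟨j, mem_singleton.1 hi ▸ hij⟩
  choose q _ using hadj
  induction R using Finset.strongInduction with
  | _ R ih =>
    rcases R.eq_empty_or_nonempty with rfl | hR
    · exact ⟨q, fun _ => 0, by simp [IsPseudoTreeOn]⟩
    obtain ⟨i, hi, j, hij, huniq⟩ := hprivate R hR
    obtain ⟨p, t, h⟩ := ih (R.erase i) (erase_ssubset hi)
    refine ⟨_, _, insert_erase hi ▸ h.insert (notMem_erase i R) hij fun x hx hxj => ?_⟩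
    exact ne_of_mem_erase hx (huniq x (mem_of_mem_erase hx) hxj)

end PrivateNeighbor

theorem IsEncodingStoppingSet.of_forall_not_private {M N : Type*} [DecidableEq M]
    {H : Matrix M N (ZMod 2)} {R : Finset M} (hR : R.Nonempty)
    (hind : LinearIndependent (ZMod 2) (fun i : R => H i))
    (h : ∀ i ∈ R, ∀ j, H i j = 1 → ∃ i' ∈ R, H i' j = 1 ∧ i' ≠ i) :
    IsEncodingStoppingSet H R := by
  refine ⟨hR, hind, ?_⟩
  rintro j ⟨i, hi, hij⟩
  obtain ⟨i', hi', hi'j, hne⟩ := h i hi j hij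
  exact one_lt_card.2 ⟨i, mem_filter.2 ⟨hi, hij⟩, i', mem_filter.2 ⟨hi', hi'j⟩, hne.symm⟩

theorem no_encodingStoppingSet_pseudoTree_general {M N : Type*} [Fintype M] [DecidableEq M]
    (H : Matrix M N (ZMod 2))
    (hind : LinearIndependent (ZMod 2) (fun i : M => H i))
    (hno : ¬ ∃ R : Finset M, IsEncodingStoppingSet H R) :
    PseudoTreeStructure H := by
  have hprivate (R : Finset M) (hR : R.Nonempty) :
      ∃ i ∈ R, ∃ j, H i j = 1 ∧ ∀ i' ∈ R, H i' j = 1 → i' = i := by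
    by_contra! h
    exact hno ⟨R, .of_forall_not_private hR (hind.comp _ Subtype.val_injective) h⟩
  obtain ⟨p, t, hinj, hadj, htier⟩ :=
    exists_isPseudoTreeOn_of_forall_exists_private hprivate (univ : Finset M)
  exact ⟨p, t, by simpa using hinj, by simpa using hadj, by simpa using htier⟩

theorem no_encodingStoppingSet_pseudoTree {M N : Type*} [Fintype M] [DecidableEq M]
    [Fintype N] (H : Matrix M N (ZMod 2))
    (hind : LinearIndependent (ZMod 2) (fun i : M => H i))
    (hno : ¬ ∃ R : Finset M, IsEncodingStoppingSet H R) :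
    PseudoTreeStructure H :=
  no_encodingStoppingSet_pseudoTree_general H hind hno
end

section
/- Suppose the Tanner graph of H is acyclic (a forest). If R is a nonempty set of rows of H such that every column in the support of R has weight at least 2 within R, then the rows {H i : i ∈ R} are linearly dependent over GF(2). (Key step in the proof of Corollary 4: a cycle-free Tanner graph contains no encoding stopping set.) -/
/-- The Tanner graph of a parity check matrix `H` over GF(2). -/
def tannerGraph {M N : Type*} (H : Matrix M N (ZMod 2)) : SimpleGraph (M ⊕ N) where
  Adj v w :=
    match v, w with
    | Sum.inl i, Sum.inr j => H i j = 1
    | Sum.inr j, Sum.inl i => H i j = 1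
    | _, _ => False
  symm := by
    constructor
    intro v w h
    cases v <;> cases w <;> simp_all
  loopless := by
    constructor
    intro v h
    cases v <;> simp_all

/-!
Restrict `H` to the rows `R` and their support `S`. The Tanner graph of this submatrix is a
forest on `|R| + |S|` vertices, so it has fewer than `|R| + |S|` edges, while its edges are the
ones of the columns, each of weight at least two, so it has at least `2 |S|` edges. Hence
`|S| < |R|`, and `|R|` vectors of `GF(2)^S` are linearly dependent.
-/

open Finset SimpleGraph

lemma Finset.card_filter_univ_subtype {α : Type*} (s : Finset α) (p : α → Prop)
    [DecidablePred p] : #{i : s | p i} = #{i ∈ s | p i} := by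
  rw [univ_eq_attach, filter_attach p, card_map, card_attach]

theorem SimpleGraph.IsAcyclic.card_edgeSet_add_one_le {V : Type*} {G : SimpleGraph V}
    [Finite V] [Nonempty V] (hG : G.IsAcyclic) : Nat.card G.edgeSet + 1 ≤ Nat.card V := by
  obtain ⟨T, hGT, hT⟩ := exists_maximal_isAcyclic_of_le_isAcyclic le_top hG
  have hTree : T.IsTree := (connected_top.maximal_le_isAcyclic_iff_isTree le_top).1 hT
  rw [← (isTree_iff_connected_and_card.1 hTree).2]
  gcongr
  exact Nat.card_mono (Set.toFinite _) (edgeSet_mono hGT)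

namespace tannerGraph

variable {M N : Type*} (H : Matrix M N (ZMod 2))

@[simp]
lemma adj_inl_inr {i : M} {j : N} : (tannerGraph H).Adj (.inl i) (.inr j) ↔ H i j = 1 :=
  Iff.rfl

@[simp]
lemma adj_inr_inl {i : M} {j : N} : (tannerGraph H).Adj (.inr j) (.inl i) ↔ H i j = 1 :=
  Iff.rfl

@[simp]
lemma not_adj_inl_inl {i i' : M} : ¬(tannerGraph H).Adj (.inl i) (.inl i') := id

@[simp]
lemma not_adj_inr_inr {j j' : N} : ¬(tannerGraph H).Adj (.inr j) (.inr j') := id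

def submatrixEmbedding {M' N' : Type*} (f : M' ↪ M) (g : N' ↪ N) :
    tannerGraph (H.submatrix f g) ↪g tannerGraph H where
  toEmbedding := f.sumMap g
  map_rel_iff' := by rintro (i | j) (i' | j') <;> simp

variable [Fintype M] [Fintype N]

lemma isBipartiteWith :
    (tannerGraph H).IsBipartiteWith (univ.map .inl : Finset (M ⊕ N))
      (univ.map .inr : Finset (M ⊕ N)) := by
  refine ⟨?_, ?_⟩
  · simp [Set.disjoint_left]
  · rintro (i | j) (i' | j') <;> simp

lemma degree_inr [DecidableRel (tannerGraph H).Adj] (j : N) :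
    (tannerGraph H).degree (.inr j) = #{i | H i j = 1} := by
  have hnbr : (tannerGraph H).neighborFinset (.inr j) = ({i | H i j = 1} : Finset M).map .inl := by
    ext (i | j') <;> simp
  rw [← card_neighborFinset_eq_degree, hnbr, card_map]

lemma sum_card_filter_eq_card_edgeSet :
    ∑ j, #{i | H i j = 1} = Nat.card (tannerGraph H).edgeSet := by
  classical
  rw [Nat.card_eq_fintype_card, ← edgeFinset_card,
    ← isBipartiteWith_sum_degrees_eq_card_edges' (isBipartiteWith H), sum_map]
  exact sum_congr rfl fun j _ => (degree_inr H j).symm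

theorem card_lt_card_of_isAcyclic [Nonempty M] (hac : (tannerGraph H).IsAcyclic)
    (hwt : ∀ j, 2 ≤ #{i | H i j = 1}) : Fintype.card N < Fintype.card M := by
  have hedges : 2 * Fintype.card N ≤ Nat.card (tannerGraph H).edgeSet :=
    calc 2 * Fintype.card N = ∑ _j : N, 2 := by simp [mul_comm]
      _ ≤ ∑ j, #{i | H i j = 1} := sum_le_sum fun j _ => hwt j
      _ = _ := sum_card_filter_eq_card_edgeSet H
  have hforest := hac.card_edgeSet_add_one_le
  rw [Nat.card_sum, Nat.card_eq_fintype_card (α := M), Nat.card_eq_fintype_card (α := N)]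
    at hforest
  omega

theorem not_linearIndependent_of_isAcyclic [Nonempty M] (hac : (tannerGraph H).IsAcyclic)
    (hwt : ∀ j, 2 ≤ #{i | H i j = 1}) : ¬LinearIndependent (ZMod 2) H := fun hli => by
  have hle := hli.fintype_card_le_finrank
  rw [Module.finrank_fintype_fun_eq_card] at hle
  exact (card_lt_card_of_isAcyclic H hac hwt).not_ge hle

end tannerGraph

theorem acyclic_tanner_no_encodingStoppingSet_general {M N : Type*}
    [Fintype N] (H : Matrix M N (ZMod 2))
    (hac : (tannerGraph H).IsAcyclic)
    (R : Finset M) (hne : R.Nonempty)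
    (hwt : ∀ j, (∃ i ∈ R, H i j = 1) → 2 ≤ (R.filter (fun i => H i j = 1)).card) :
    ¬ LinearIndependent (ZMod 2) (fun i : R => H i) := by
  classical
  set S : Finset N := {j | ∃ i ∈ R, H i j = 1}
  let H' : Matrix R S (ZMod 2) := H.submatrix (↑) (↑)
  have : Nonempty R := hne.to_subtype
  have hac' : (tannerGraph H').IsAcyclic :=
    hac.embedding (tannerGraph.submatrixEmbedding H (.subtype _) (.subtype _))
  have hwt' : ∀ j, 2 ≤ #{i | H' i j = 1} := fun ⟨j, hj⟩ =>
    (hwt j (by simpa [S] using hj)).trans_eq (card_filter_univ_subtype R _).symm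
  have hzero : ∀ x : ZMod 2, x ≠ 1 → x = 0 := by decide
  have hrow : ∀ i : R,
      Function.ExtendByZero.linearMap (ZMod 2) ((↑) : S → N) (H' i) = H i := by
    intro i
    ext j
    by_cases hj : j ∈ S
    · exact Subtype.val_injective.extend_apply _ _ (⟨j, hj⟩ : S)
    · rw [Function.ExtendByZero.linearMap_apply, Function.extend_apply' _ _ _ (by simpa),
        Pi.zero_apply]
      exact (hzero (H i j) fun h => hj (by simpa [S] using ⟨i, i.2, h⟩)).symm
  intro hli
  refine tannerGraph.not_linearIndependent_of_isAcyclic H' hac' hwt' (.of_comp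
    (Function.ExtendByZero.linearMap (ZMod 2) ((↑) : S → N)) ?_)
  convert hli using 1
  exact funext hrow

theorem acyclic_tanner_no_encodingStoppingSet {M N : Type*} [Fintype M] [DecidableEq M]
    [Fintype N] (H : Matrix M N (ZMod 2))
    (hac : (tannerGraph H).IsAcyclic)
    (R : Finset M) (hne : R.Nonempty)
    (hwt : ∀ j, (∃ i ∈ R, H i j = 1) → 2 ≤ (R.filter (fun i => H i j = 1)).card) :
    ¬ LinearIndependent (ZMod 2) (fun i : R => H i) :=
  acyclic_tanner_no_encodingStoppingSet_general H hac R hne hwt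
end

section
/- Suppose every column of H has weight at most 2 within the full set of rows (the code is a cycle code, i.e., each bit node has degree at most 2). If R is a nonempty set of rows of H such that every column in the support of R has weight at least 2 within R, then the sum over GF(2) of the rows {H i : i ∈ R} is the zero vector; in particular these rows are linearly dependent. (Key step in the proof of Corollary 2: a cycle code contains no encoding stopping set.) -/
/-! In a cycle code every column has weight at most 2, and the stopping-set condition forces each
column to have weight 0 or at least 2 within `R`; so every column meets `R` in 0 or 2 rows and the
rows of `R` add up to zero over GF(2). A nonempty family with zero sum is linearly dependent. -/

open Finset

theorem ZMod.sum_eq_card_filter_eq_one {ι : Type*} (s : Finset ι) (f : ι → ZMod 2) :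
    ∑ i ∈ s, f i = #(s.filter (fun i => f i = 1)) := by
  have hbool : ∀ x : ZMod 2, x = if x = 1 then 1 else 0 := by decide
  rw [← sum_boole]
  exact sum_congr rfl fun i _ => hbool (f i)

theorem not_linearIndependent_of_sum_eq_zero {ι R V : Type*} [Semiring R] [Nontrivial R]
    [AddCommMonoid V] [Module R V] {v : ι → V} {s : Finset ι} (hs : s.Nonempty)
    (hsum : ∑ i ∈ s, v i = 0) : ¬ LinearIndependent R (fun i : s => v i) := by
  obtain ⟨i, hi⟩ := hs
  rw [Fintype.not_linearIndependent_iffₛ]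
  refine ⟨1, 0, ?_, ⟨i, hi⟩, one_ne_zero⟩
  simpa only [Pi.one_apply, one_smul, Pi.zero_apply, zero_smul, sum_const_zero,
    sum_coe_sort s v] using hsum

theorem card_filter_eq_zero_or_two {ι : Type*} [Fintype ι] (p : ι → Prop) [DecidablePred p]
    (hle : #(univ.filter p) ≤ 2) (s : Finset ι) (hge : (∃ i ∈ s, p i) → 2 ≤ #(s.filter p)) :
    #(s.filter p) = 0 ∨ #(s.filter p) = 2 := by
  have hle_s : #(s.filter p) ≤ 2 :=
    (card_le_card (filter_subset_filter p (subset_univ s))).trans hle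
  by_cases hex : ∃ i ∈ s, p i
  · exact Or.inr (le_antisymm hle_s (hge hex))
  · exact Or.inl (card_eq_zero.2 (filter_false_of_mem fun i hi hpi => hex ⟨i, hi, hpi⟩))

theorem cycleCode_stoppingSet_rows_sum_zero_general {M N : Type*} [Fintype M]
    (H : Matrix M N (ZMod 2))
    (hdeg : ∀ j, (Finset.univ.filter (fun i => H i j = 1)).card ≤ 2)
    (R : Finset M) (hne : R.Nonempty)
    (hwt : ∀ j, (∃ i ∈ R, H i j = 1) → 2 ≤ (R.filter (fun i => H i j = 1)).card) :
    (∑ i ∈ R, H i) = 0 ∧ ¬ LinearIndependent (ZMod 2) (fun i : R => H i) := by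
  have hsum : ∑ i ∈ R, H i = 0 := by
    funext j
    rw [Pi.zero_apply, Finset.sum_apply j R H, ZMod.sum_eq_card_filter_eq_one]
    rcases card_filter_eq_zero_or_two _ (hdeg j) R (hwt j) with h | h <;> rw [h] <;> rfl
  exact ⟨hsum, not_linearIndependent_of_sum_eq_zero hne hsum⟩

theorem cycleCode_stoppingSet_rows_sum_zero {M N : Type*} [Fintype M] [DecidableEq M]
    [Fintype N] (H : Matrix M N (ZMod 2))
    (hdeg : ∀ j, (Finset.univ.filter (fun i => H i j = 1)).card ≤ 2)
    (R : Finset M) (hne : R.Nonempty)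
    (hwt : ∀ j, (∃ i ∈ R, H i j = 1) → 2 ≤ (R.filter (fun i => H i j = 1)).card) :
    (∑ i ∈ R, H i) = 0 ∧ ¬ LinearIndependent (ZMod 2) (fun i : R => H i) :=
  cycleCode_stoppingSet_rows_sum_zero_general H hdeg R hne hwt
end

section
/- Let H : Matrix (Fin m) (Fin n) (ZMod 2), let j : Fin n be a column, and let T be a set of rows. Define the split matrix H' : Matrix (Fin (m+1)) (Fin (n+1)) (ZMod 2) by: for every row i < m and column k < n with k ≠ j, H' i k = H i k; H' i j = H i j if i ∈ T and H' i j = 0 otherwise; the new last column satisfies H' i n = H i j if i ∉ T and H' i n = 0 otherwise; and the new last row satisfies H' m j = 1, H' m n = 1, and H' m k = 0 for every column k ∉ {j, n}. Then the map sending x : Fin n → ZMod 2 to its extension x' : Fin (n+1) → ZMod 2 with x' agreeing with x on Fin n and x' n = x j is a bijection from the code {x : H.mulVec x = 0} onto the code {y : H'.mulVec y = 0}. (Key step in the proof of Theorem 4: splitting a bit node into two bit nodes joined by an auxiliary degree-2 check node yields an equivalent code.) -/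
/-!
Splitting the bit node `j` into `j` and a new node `n`, joined by the check `x_j + x_n = 0`,
forces `x_n = x_j` over GF(2). Once the two copies agree, every old check `i` sees
`(H' i j + H' i n) x_j = H i j x_j`, whichever of the two copies it was reattached to, so
`H' (snoc x (x j))` is `H x` extended by the auxiliary check `x_j + x_j = 0`.
-/

open Matrix

section SplitColumn

variable {R : Type*} [Semiring R] {m n : ℕ}

theorem mulVec_snoc_castSucc_of_split_column (H : Matrix (Fin m) (Fin n) R) (j : Fin n)
    (H' : Matrix (Fin (m + 1)) (Fin (n + 1)) R)
    (hold : ∀ (i : Fin m) (k : Fin n), k ≠ j → H' i.castSucc k.castSucc = H i k)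
    (hcol : ∀ i : Fin m, H' i.castSucc j.castSucc + H' i.castSucc (Fin.last n) = H i j)
    (x : Fin n → R) (i : Fin m) :
    (H' *ᵥ Fin.snoc x (x j)) i.castSucc = (H *ᵥ x) i := by
  have hrest : ∑ k ∈ Finset.univ.erase j, H' i.castSucc k.castSucc * x k
      = ∑ k ∈ Finset.univ.erase j, H i k * x k :=
    Finset.sum_congr rfl fun k hk => by rw [hold i k (Finset.ne_of_mem_erase hk)]
  rw [mulVec, mulVec, dotProduct, dotProduct, Fin.sum_univ_castSucc]
  simp only [Fin.snoc_castSucc, Fin.snoc_last]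
  rw [← Finset.add_sum_erase _ _ (Finset.mem_univ j),
    ← Finset.add_sum_erase _ _ (Finset.mem_univ j), hrest, ← hcol i, add_mul]
  exact add_right_comm _ _ _

theorem mulVec_last_of_auxiliary_row (j : Fin n) (H' : Matrix (Fin (m + 1)) (Fin (n + 1)) R)
    (hauxj : H' (Fin.last m) j.castSucc = 1) (hauxn : H' (Fin.last m) (Fin.last n) = 1)
    (hauxz : ∀ k : Fin n, k ≠ j → H' (Fin.last m) k.castSucc = 0) (y : Fin (n + 1) → R) :
    (H' *ᵥ y) (Fin.last m) = y j.castSucc + y (Fin.last n) := by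
  have hsum : ∑ k : Fin n, H' (Fin.last m) k.castSucc * y k.castSucc = y j.castSucc := by
    rw [Finset.sum_eq_single_of_mem j (Finset.mem_univ j)
      (fun k _ hk => by rw [hauxz k hk, zero_mul]), hauxj, one_mul]
  rw [mulVec, dotProduct, Fin.sum_univ_castSucc, hsum, hauxn, one_mul]

end SplitColumn

theorem bitNode_splitting_code_equiv (m n : ℕ)
    (H : Matrix (Fin m) (Fin n) (ZMod 2)) (j : Fin n) (T : Finset (Fin m))
    (H' : Matrix (Fin (m + 1)) (Fin (n + 1)) (ZMod 2))
    (hold : ∀ (i : Fin m) (k : Fin n), k ≠ j →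
      H' i.castSucc k.castSucc = H i k)
    (hsplitj : ∀ i : Fin m,
      H' i.castSucc j.castSucc = if i ∈ T then H i j else 0)
    (hsplitn : ∀ i : Fin m,
      H' i.castSucc (Fin.last n) = if i ∈ T then 0 else H i j)
    (hauxj : H' (Fin.last m) j.castSucc = 1)
    (hauxn : H' (Fin.last m) (Fin.last n) = 1)
    (hauxz : ∀ k : Fin n, k ≠ j → H' (Fin.last m) k.castSucc = 0) :
    Set.BijOn (fun x : Fin n → ZMod 2 => Fin.snoc x (x j))
      {x | H.mulVec x = 0} {y | H'.mulVec y = 0} := by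
  have hcol (i : Fin m) : H' i.castSucc j.castSucc + H' i.castSucc (Fin.last n) = H i j := by
    rw [hsplitj, hsplitn]; split_ifs <;> simp
  have hlast := mulVec_last_of_auxiliary_row j H' hauxj hauxn hauxz
  have hcode (x : Fin n → ZMod 2) : H' *ᵥ Fin.snoc x (x j) = 0 ↔ H *ᵥ x = 0 := by
    simp only [funext_iff, Fin.forall_fin_succ', Pi.zero_apply, hlast, Fin.snoc_castSucc,
      Fin.snoc_last, CharTwo.add_self_eq_zero, and_true,
      mulVec_snoc_castSucc_of_split_column H j H' hold hcol]
  refine ⟨fun x hx => (hcode x).2 hx, fun x _ x' _ h => ?_, fun y hy => ?_⟩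
  · simpa using congrArg Fin.init h
  · have hy' : Fin.snoc (Fin.init y) (Fin.init y j) = y := by
      have hyj : y j.castSucc = y (Fin.last n) := by
        simpa [hlast, CharTwo.add_eq_zero] using congrFun hy (Fin.last m)
      rw [Fin.init, hyj, Fin.snoc_init_self]
    exact ⟨Fin.init y, (hcode _).1 (hy'.symm ▸ hy), hy'⟩
end

section
/- Let u, v : N → ZMod 2 be vectors over GF(2), with N a finite type, such that u and v are linearly independent. Then there exist indices γ and δ in N such that u γ = 1, v δ = 1, and it is not the case that both v γ = 1 and u δ = 1; necessarily γ ≠ δ. (This is the existence claim of Appendix A: for two independent key check equations C_α, C_β of a 2-fold-constraint encoding stopping set, one can always choose reevaluated bits x_γ, x_δ satisfying conditions (D1)–(D3), namely that x_γ is constrained by C_α, x_δ is constrained by C_β, and x_γ and x_δ are not both contained in C_α and C_β.) -/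
/-! Over GF(2) a vector is determined by its support, so independence of `u` and `v` says their
supports are nonempty and distinct. Then either some `γ ∈ supp u` lies outside `supp v` (take any
`δ ∈ supp v`), or some `δ ∈ supp v` lies outside `supp u` (take any `γ ∈ supp u`). -/

open Function

theorem Set.exists_mem_mem_not_and_of_ne {α : Type*} {s t : Set α} (hs : s.Nonempty)
    (ht : t.Nonempty) (hst : s ≠ t) : ∃ γ ∈ s, ∃ δ ∈ t, ¬(γ ∈ t ∧ δ ∈ s) := by
  by_cases hsub : s ⊆ t
  · obtain ⟨δ, hδt, hδs⟩ := Set.not_subset.mp fun hts => hst (hsub.antisymm hts)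
    obtain ⟨γ, hγ⟩ := hs
    exact ⟨γ, hγ, δ, hδt, fun h => hδs h.2⟩
  · obtain ⟨γ, hγs, hγt⟩ := Set.not_subset.mp hsub
    obtain ⟨δ, hδ⟩ := ht
    exact ⟨γ, hγs, δ, hδ, fun h => hγt h.1⟩

theorem ZMod.ne_zero_iff_eq_one_two {x : ZMod 2} : x ≠ 0 ↔ x = 1 := by
  revert x
  decide

theorem ZMod.eq_of_support_eq_two {N : Type*} {u v : N → ZMod 2}
    (h : support u = support v) : u = v := by
  funext i
  have hi : u i ≠ 0 ↔ v i ≠ 0 := Set.ext_iff.mp h i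
  revert hi
  generalize u i = a
  generalize v i = b
  revert a b
  decide

theorem exists_reevaluated_bits_general {N : Type*}
    (u v : N → ZMod 2)
    (hind : LinearIndependent (ZMod 2) ![u, v]) :
    ∃ γ δ : N, u γ = 1 ∧ v δ = 1 ∧ ¬(v γ = 1 ∧ u δ = 1) ∧ γ ≠ δ := by
  obtain ⟨hv, hsmul⟩ := linearIndependent_fin2.mp hind
  have hu : u ≠ 0 := by simpa [eq_comm] using hsmul 0
  have huv : u ≠ v := by simpa [eq_comm] using hsmul 1
  obtain ⟨γ, hγ, δ, hδ, hboth⟩ := Set.exists_mem_mem_not_and_of_ne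
    (support_nonempty_iff.mpr hu) (support_nonempty_iff.mpr (by simpa using hv))
    (mt ZMod.eq_of_support_eq_two huv)
  simp only [mem_support, ZMod.ne_zero_iff_eq_one_two] at hγ hδ hboth
  exact ⟨γ, δ, hγ, hδ, hboth, by rintro rfl; exact hboth ⟨hδ, hγ⟩⟩

theorem exists_reevaluated_bits {N : Type*} [Fintype N]
    (u v : N → ZMod 2)
    (hind : LinearIndependent (ZMod 2) ![u, v]) :
    ∃ γ δ : N, u γ = 1 ∧ v δ = 1 ∧ ¬(v γ = 1 ∧ u δ = 1) ∧ γ ≠ δ :=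
  exists_reevaluated_bits_general u v hind
end
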